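/- Removing the k spike vertices from the clause gadget 𝒢_k leaves a path on 2k + 2 vertices, whose independence number is k + 1, strictly less than α(𝒢_k) = k + 2. -/

import Mathlib

open SimpleGraph

/-- The maximum size of an independent set of `G` contained in the vertex set `A`
(i.e. the independence number of the induced subgraph `G[A]`). -/
noncomputable def alphaOn {V : Type*} [Fintype V] (G : SimpleGraph V) (A : Set V) : ℕ :=
  sSup {n | ∃ s : Finset V, ↑s ⊆ A ∧ (↑s : Set V).Pairwise (fun a b => ¬ G.Adj a b) ∧ s.card = n}

/-- The open neighborhood of a set of vertices. -/
def nbhd {V : Type*} (G : SimpleGraph V) (S : Set V) : Set V :=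
  {v | v ∉ S ∧ ∃ u ∈ S, G.Adj u v}

/-- `v` is α-critical in the induced subgraph `G[A]`. -/
def critOn {V : Type*} [Fintype V] (G : SimpleGraph V) (A : Set V) (v : V) : Prop :=
  alphaOn G A = 1 + alphaOn G (A \ {v})

/-- For a tree `T` rooted at `r`, the vertex set of the subtree rooted at `a`:
those vertices reachable from `a` without passing through `r`. -/
def descend {V : Type*} (T : SimpleGraph V) (r a : V) : Set V :=
  {v | ∃ p : T.Walk a v, r ∉ p.support}

/-- The connected component of `v₀` in `G - X`: vertices reachable from `v₀` avoiding `X`. -/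
def avoidComp {V : Type*} (G : SimpleGraph V) (X : Set V) (v₀ : V) : Set V :=
  {v | ∃ p : G.Walk v₀ v, ∀ x ∈ p.support, x ∉ X}

/-- Vertices of the clause gadget `𝒢 k`: `L j` is the left vertex `l_{j+1}` (for `j : Fin (k+1)`,
giving `l_1, …, l_{k+1}`), `R j` is the right vertex `r_j` (giving `r_0, …, r_k`), and
`S j` is the spike vertex `s_{j+1}` (giving `s_1, …, s_k`). -/
inductive GadgetV (k : ℕ) : Type
  | L : Fin (k + 1) → GadgetV k
  | R : Fin (k + 1) → GadgetV k
  | S : Fin k → GadgetV k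
  deriving DecidableEq, Fintype

/-- The edges of the clause gadget: the connecting edges `r_j l_{j+1}` and, for each
triangle `T_{m+1}` (with `m : Fin k`), the triangle edges `l_{m+1} r_{m+1}`,
`l_{m+1} s_{m+1}` and `r_{m+1} s_{m+1}`. -/
def gadgetRel (k : ℕ) : GadgetV k → GadgetV k → Prop := fun x y =>
  (∃ j : Fin (k + 1), x = .R j ∧ y = .L j) ∨
  (∃ m : Fin k,
    (x = .L m.castSucc ∧ y = .R m.succ) ∨
    (x = .L m.castSucc ∧ y = .S m) ∨
    (x = .R m.succ ∧ y = .S m))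

/-- The clause gadget `𝒢 k`. -/
def gadget (k : ℕ) : SimpleGraph (GadgetV k) := SimpleGraph.fromRel (gadgetRel k)

/-!
Deleting the spikes leaves `r₀ l₁ r₁ l₂ … r_k l_{k+1}`, a path on `2k + 2` vertices. Both
independence numbers are computed by a clique cover matched by an independent set of the same
size: the `k + 1` edges `r_j l_{j+1}` cover the path and `l₁, …, l_{k+1}` is independent; the `k`
triangles together with `r₀` and `l_{k+1}` cover `𝒢_k`, and `r₀, l_{k+1}, s₁, …, s_k` is
independent.
-/

section AlphaOn

variable {V : Type*} [Fintype V] {G : SimpleGraph V} {A : Set V}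

lemma le_alphaOn {s : Finset V} (hsA : ↑s ⊆ A)
    (hs : (↑s : Set V).Pairwise (fun a b => ¬ G.Adj a b)) :
    s.card ≤ alphaOn G A :=
  le_csSup ⟨Fintype.card V, by rintro n ⟨t, -, -, rfl⟩; exact t.card_le_univ⟩ ⟨s, hsA, hs, rfl⟩

/-- The fibres of `f` on `A` are cliques, and an independent set meets each of them at most once. -/
lemma alphaOn_le_of_cliqueCover {ι : Type*} [Fintype ι] (f : V → ι)
    (hf : ∀ a ∈ A, ∀ b ∈ A, a ≠ b → f a = f b → G.Adj a b) :
    alphaOn G A ≤ Fintype.card ι := by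
  refine csSup_le ⟨0, ∅, by simp⟩ ?_
  rintro n ⟨s, hsA, hs, rfl⟩
  refine Finset.card_le_card_of_injOn f (fun _ _ => Finset.mem_coe.2 (Finset.mem_univ _)) ?_
  intro a ha b hb hab
  by_contra hne
  exact hs ha hb hne (hf a (hsA ha) b (hsA hb) hne hab)

end AlphaOn

namespace GadgetV

variable {k : ℕ}

@[simp] lemma gadget_adj_L_L (i j : Fin (k + 1)) : ¬ (gadget k).Adj (L i) (L j) := by
  simp [gadget, gadgetRel]

@[simp] lemma gadget_adj_R_R (i j : Fin (k + 1)) : ¬ (gadget k).Adj (R i) (R j) := by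
  simp [gadget, gadgetRel]

@[simp] lemma gadget_adj_S_S (m m' : Fin k) : ¬ (gadget k).Adj (S m) (S m') := by
  simp [gadget, gadgetRel]

@[simp] lemma gadget_adj_L_R (i j : Fin (k + 1)) :
    (gadget k).Adj (L i) (R j) ↔ j.val = i.val ∨ j.val = i.val + 1 := by
  simp [gadget, gadgetRel, Fin.ext_iff, Fin.exists_iff]
  omega

@[simp] lemma gadget_adj_R_L (i j : Fin (k + 1)) :
    (gadget k).Adj (R j) (L i) ↔ j.val = i.val ∨ j.val = i.val + 1 := by
  rw [adj_comm, gadget_adj_L_R]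

@[simp] lemma gadget_adj_L_S (i : Fin (k + 1)) (m : Fin k) :
    (gadget k).Adj (L i) (S m) ↔ i.val = m.val := by
  simp [gadget, gadgetRel, Fin.ext_iff, Fin.exists_iff]
  omega

@[simp] lemma gadget_adj_S_L (i : Fin (k + 1)) (m : Fin k) :
    (gadget k).Adj (S m) (L i) ↔ i.val = m.val := by
  rw [adj_comm, gadget_adj_L_S]

@[simp] lemma gadget_adj_R_S (j : Fin (k + 1)) (m : Fin k) :
    (gadget k).Adj (R j) (S m) ↔ j.val = m.val + 1 := by
  simp [gadget, gadgetRel, Fin.ext_iff, Fin.exists_iff]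

@[simp] lemma gadget_adj_S_R (j : Fin (k + 1)) (m : Fin k) :
    (gadget k).Adj (S m) (R j) ↔ j.val = m.val + 1 := by
  rw [adj_comm, gadget_adj_R_S]

def spikes (k : ℕ) : Set (GadgetV k) := {v | ∃ m, v = S m}

@[simp] lemma L_notMem_spikes (j : Fin (k + 1)) : L j ∉ spikes k := by
  rintro ⟨m, ⟨⟩⟩

@[simp] lemma R_notMem_spikes (j : Fin (k + 1)) : R j ∉ spikes k := by
  rintro ⟨m, ⟨⟩⟩

@[simp] lemma S_mem_spikes (m : Fin k) : S m ∈ spikes k := ⟨m, rfl⟩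

/-- Position on the path `r₀ l₁ r₁ l₂ … r_k l_{k+1}` left after deleting the spikes. -/
def pathPos : GadgetV k → ℕ
  | R j => 2 * j
  | L j => 2 * j + 1
  | S _ => 0

lemma pathPos_lt {v : GadgetV k} (hv : v ∉ spikes k) : pathPos v < 2 * k + 2 := by
  cases v <;> simp_all [pathPos] <;> omega

lemma gadget_adj_iff_pathPos {v w : GadgetV k} (hv : v ∉ spikes k) (hw : w ∉ spikes k) :
    (gadget k).Adj v w ↔ pathPos v + 1 = pathPos w ∨ pathPos w + 1 = pathPos v := by
  cases v <;> cases w <;> simp_all [pathPos] <;> omega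

lemma pathPos_injOn : Set.InjOn (pathPos (k := k)) (spikes k)ᶜ := by
  rintro (i | i | m) hv (j | j | m') hw h <;> simp_all [pathPos, Fin.ext_iff] <;> omega

noncomputable def spikeFreeEquivFin : ↥(spikes k)ᶜ ≃ Fin (2 * k + 2) :=
  Equiv.ofBijective (fun v => ⟨pathPos v.1, pathPos_lt v.2⟩) <| by
    constructor
    · exact fun v w h => Subtype.ext (pathPos_injOn v.2 w.2 (Fin.mk.inj_iff.1 h))
    · rintro ⟨n, hn⟩
      rcases Nat.even_or_odd' n with ⟨j, rfl | rfl⟩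
      · exact ⟨⟨R ⟨j, by omega⟩, by simp⟩, rfl⟩
      · exact ⟨⟨L ⟨j, by omega⟩, by simp⟩, rfl⟩

noncomputable def spikeFreeIsoPathGraph :
    (gadget k).induce (spikes k)ᶜ ≃g pathGraph (2 * k + 2) where
  toEquiv := spikeFreeEquivFin
  map_rel_iff' {v w} := by
    change (pathGraph _).Adj ⟨pathPos v.1, pathPos_lt v.2⟩ ⟨pathPos w.1, pathPos_lt w.2⟩ ↔ _
    simp only [pathGraph_adj, comap_adj, Function.Embedding.subtype_apply]
    exact (gadget_adj_iff_pathPos v.2 w.2).symm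

/-- The fibres off the spikes are the edges `r_j l_{j+1}` (recall `L j = l_{j+1}`, `R j = r_j`). -/
def matchingIndex : GadgetV k → Fin (k + 1)
  | L j => j
  | R j => j
  | S m => m.castSucc

/-- The fibres are `{r₀}`, the triangles `{l_i, r_i, s_i}` and `{l_{k+1}}`. -/
def triangleIndex : GadgetV k → Fin (k + 2)
  | L j => j.succ
  | R j => j.castSucc
  | S m => m.succ.castSucc

lemma alphaOn_spikeFree_le : alphaOn (gadget k) (spikes k)ᶜ ≤ k + 1 := by
  simpa using alphaOn_le_of_cliqueCover (G := gadget k) matchingIndex <| by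
    rintro (i | i | m) ha (j | j | m') hb hne h <;> simp_all [matchingIndex, Fin.ext_iff]

lemma alphaOn_univ_le : alphaOn (gadget k) Set.univ ≤ k + 2 := by
  simpa using alphaOn_le_of_cliqueCover (G := gadget k) triangleIndex <| by
    rintro (i | i | m) - (j | j | m') - hne h <;> simp_all [triangleIndex, Fin.ext_iff]

lemma le_alphaOn_spikeFree : k + 1 ≤ alphaOn (gadget k) (spikes k)ᶜ := by
  have h := le_alphaOn (G := gadget k) (A := (spikes k)ᶜ) (s := Finset.univ.image L)
    (by simp [Set.subset_def]) (by simp [Set.Pairwise])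
  rwa [Finset.card_image_of_injective _ fun _ _ => L.inj, Finset.card_univ, Fintype.card_fin] at h

lemma le_alphaOn_univ (hk : 1 ≤ k) : k + 2 ≤ alphaOn (gadget k) Set.univ := by
  have h := le_alphaOn (G := gadget k)
    (s := insert (R 0) (insert (L (Fin.last k)) (Finset.univ.image S)))
    (Set.subset_univ _) (by simpa [Set.Pairwise] using ⟨by omega, fun a => a.isLt.ne'⟩)
  rwa [Finset.card_insert_of_notMem (by simp), Finset.card_insert_of_notMem (by simp),
    Finset.card_image_of_injective _ fun _ _ => S.inj, Finset.card_univ, Fintype.card_fin] at h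

end GadgetV

open GadgetV in
theorem stmt13 (k : ℕ) (hk : 1 ≤ k) :
    Nonempty (((gadget k).induce {v : GadgetV k | ∃ m, v = GadgetV.S m}ᶜ) ≃g
        SimpleGraph.pathGraph (2 * k + 2)) ∧
    alphaOn (gadget k) {v : GadgetV k | ∃ m, v = GadgetV.S m}ᶜ = k + 1 ∧
    alphaOn (gadget k) Set.univ = k + 2 ∧
    alphaOn (gadget k) {v : GadgetV k | ∃ m, v = GadgetV.S m}ᶜ <
      alphaOn (gadget k) Set.univ := by
  have hpath : alphaOn (gadget k) (spikes k)ᶜ = k + 1 :=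
    le_antisymm alphaOn_spikeFree_le le_alphaOn_spikeFree
  have huniv : alphaOn (gadget k) Set.univ = k + 2 :=
    le_antisymm alphaOn_univ_le (le_alphaOn_univ hk)
  exact ⟨⟨spikeFreeIsoPathGraph⟩, hpath, huniv, hpath.trans_lt (by omega)⟩
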